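/- Let Ω ⊂ ℝ^N be a bounded domain with defining function ρ of class C² such that the Hessian of ρ is positive definite on the full tangent space T_p ∂Ω for every p ∈ ∂Ω (strong convexity). Then Ω is strictly convex: for any two distinct points a, b ∈ Ω̄, the open segment { (1−t)a + t b : 0 < t < 1 } is contained in Ω. -/

import Mathlib

/-!
If an open segment between two points of `closure Ω` met `frontier Ω` at `p`, then `ρ`, being
`≤ 0` on `closure Ω` and `0` at `p`, would restrict along the segment to a function with a local
maximum at `p`; hence `Dρ(p) v = 0` and `D²ρ(p)(v, v) ≤ 0` for the direction `v`, against strong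
convexity. For points of `Ω` this makes the pairs `(x, y) ∈ Ω × Ω` with `[x, y] ⊆ Ω` a relatively
clopen subset of the connected set `Ω × Ω`, so `Ω` is convex; then `closure Ω` is convex and the
same argument applies to its points.
-/

open Set Filter Topology

section Calculus

theorem IsLocalMax.deriv_deriv_nonpos {f : ℝ → ℝ} {x₀ : ℝ} (hmax : IsLocalMax f x₀)
    (hc : ContinuousAt f x₀) : deriv (deriv f) x₀ ≤ 0 := by
  -- otherwise `x₀` is also a local minimum, so `f` is locally constant
  by_contra! hpos
  have hmin : IsLocalMin f x₀ := isLocalMin_of_deriv_deriv_pos hpos hmax.deriv_eq_zero hc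
  have hconst : f =ᶠ[𝓝 x₀] fun _ => f x₀ :=
    (hmax.and hmin).mono fun _ h => le_antisymm h.1 h.2
  refine hpos.ne' ?_
  rw [hconst.deriv.deriv_eq]
  simp

variable {E F : Type*} [NormedAddCommGroup E] [NormedSpace ℝ E]
  [NormedAddCommGroup F] [NormedSpace ℝ F] {f : E → F}

theorem hasDerivAt_comp_add_smul {f' : E →L[ℝ] F} (x v : E) (s : ℝ)
    (hf : HasFDerivAt f f' (x + s • v)) :
    HasDerivAt (fun s : ℝ => f (x + s • v)) (f' v) s := by
  have hline : HasDerivAt (fun s : ℝ => x + s • v) v s := by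
    simpa using ((hasDerivAt_id s).smul_const v).const_add x
  exact hf.comp_hasDerivAt s hline

theorem deriv_comp_add_smul (hf : Differentiable ℝ f) (x v : E) :
    deriv (fun s : ℝ => f (x + s • v)) = fun s => fderiv ℝ f (x + s • v) v :=
  funext fun s => (hasDerivAt_comp_add_smul x v s (hf _).hasFDerivAt).deriv

theorem deriv_deriv_comp_add_smul (hf : ContDiff ℝ 2 f) (x v : E) (s : ℝ) :
    deriv (deriv fun s : ℝ => f (x + s • v)) s = iteratedFDeriv ℝ 2 f (x + s • v) ![v, v] := by
  have hdf : Differentiable ℝ (fderiv ℝ f) :=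
    (hf.fderiv_right (m := 1) (by norm_num)).differentiable one_ne_zero
  rw [deriv_comp_add_smul (hf.differentiable (by norm_num)), iteratedFDeriv_two_apply]
  exact ((hasDerivAt_comp_add_smul x v s (hdf _).hasFDerivAt).clm_apply
    (hasDerivAt_const s v)).deriv.trans (by simp)

theorem IsLocalMax.fderiv_line_eq_zero {f : E → ℝ} (hf : Differentiable ℝ f) {x v : E}
    (hmax : IsLocalMax (fun s : ℝ => f (x + s • v)) 0) : fderiv ℝ f x v = 0 := by
  simpa [deriv_comp_add_smul hf] using hmax.deriv_eq_zero

theorem IsLocalMax.iteratedFDeriv_two_line_nonpos {f : E → ℝ} (hf : ContDiff ℝ 2 f) {x v : E}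
    (hmax : IsLocalMax (fun s : ℝ => f (x + s • v)) 0) :
    iteratedFDeriv ℝ 2 f x ![v, v] ≤ 0 := by
  have hc : ContinuousAt (fun s : ℝ => f (x + s • v)) 0 := by
    have := hf.continuous; fun_prop
  simpa [deriv_deriv_comp_add_smul hf] using hmax.deriv_deriv_nonpos hc

end Calculus

section Segments

variable {E : Type*} [AddCommGroup E] [Module ℝ E]

theorem segment_subset_iff_forall_add_smul_sub {U : Set E} {x y : E} :
    segment ℝ x y ⊆ U ↔ ∀ s ∈ Icc (0 : ℝ) 1, x + s • (y - x) ∈ U := by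
  rw [segment_eq_image', image_subset_iff]
  rfl

variable [TopologicalSpace E] [IsTopologicalAddGroup E] [ContinuousSMul ℝ E]

theorem continuous_segment_parametrization :
    Continuous fun z : (E × E) × ℝ => z.1.1 + z.2 • (z.1.2 - z.1.1) := by
  fun_prop

theorem isOpen_setOf_segment_subset {U : Set E} (hU : IsOpen U) :
    IsOpen {q : E × E | segment ℝ q.1 q.2 ⊆ U} := by
  simp only [segment_subset_iff_forall_add_smul_sub]
  refine isOpen_iff_eventually.2 fun q hq => isCompact_Icc.eventually_forall_of_forall_eventually
    fun s hs => ?_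
  exact continuous_segment_parametrization.continuousAt.eventually_mem (hU.mem_nhds (hq s hs))

theorem isClosed_setOf_segment_subset {C : Set E} (hC : IsClosed C) :
    IsClosed {q : E × E | segment ℝ q.1 q.2 ⊆ C} := by
  simp only [segment_subset_iff_forall_add_smul_sub, ofPred_forall]
  exact isClosed_biInter fun s _ =>
    hC.preimage (continuous_segment_parametrization.comp (continuous_id.prodMk continuous_const))

theorem IsPreconnected.convex_of_openSegment_subset {U : Set E} (hU : IsOpen U)
    (hconn : IsPreconnected U)
    (h : ∀ x ∈ U, ∀ y ∈ U, x ≠ y → segment ℝ x y ⊆ closure U → openSegment ℝ x y ⊆ U) :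
    Convex ℝ U := by
  rcases U.eq_empty_or_nonempty with rfl | ⟨x₀, hx₀⟩
  · exact convex_empty
  set A := {q : E × E | segment ℝ q.1 q.2 ⊆ U}
  have hdiag : (x₀, x₀) ∈ U ×ˢ U ∩ A := ⟨⟨hx₀, hx₀⟩, by simpa [A] using hx₀⟩
  have hclosed : closure A ∩ U ×ˢ U ⊆ A := by
    rintro ⟨x, y⟩ ⟨hcl, hx, hy⟩
    have hseg : segment ℝ x y ⊆ closure U :=
      closure_minimal (fun q hq => (hq : segment ℝ q.1 q.2 ⊆ U).trans subset_closure)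
        (isClosed_setOf_segment_subset isClosed_closure) hcl
    rcases eq_or_ne x y with rfl | hxy
    · simpa [A] using hx
    · change segment ℝ x y ⊆ U
      rw [← insert_endpoints_openSegment]
      exact insert_subset hx (insert_subset hy (h x hx y hy hxy hseg))
  have hUA : U ×ˢ U ⊆ A := (hconn.prod hconn).subset_of_closure_inter_subset
    (isOpen_setOf_segment_subset hU) ⟨_, hdiag⟩ hclosed
  exact convex_iff_segment_subset.2 fun x hx y hy => hUA (mk_mem_prod hx hy)

end Segments

theorem openSegment_subset_of_segment_subset_closure {E : Type*} [NormedAddCommGroup E]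
    [NormedSpace ℝ E] {ρ : E → ℝ} (hρ : ContDiff ℝ 2 ρ)
    (hhess : ∀ p ∈ frontier {x | ρ x < 0}, ∀ v : E, v ≠ 0 →
      fderiv ℝ ρ p v = 0 → 0 < iteratedFDeriv ℝ 2 ρ p ![v, v])
    {a b : E} (hab : a ≠ b) (hseg : segment ℝ a b ⊆ closure {x | ρ x < 0}) :
    openSegment ℝ a b ⊆ {x | ρ x < 0} := by
  rw [openSegment_eq_image']
  rintro _ ⟨t, ⟨ht0, ht1⟩, rfl⟩
  by_contra hp
  set v := b - a
  have hle : ∀ s ∈ Icc (0 : ℝ) 1, ρ (a + s • v) ≤ 0 := segment_subset_iff_forall_add_smul_sub.1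
    (hseg.trans (closure_lt_subset_le hρ.continuous continuous_const))
  have hfr : a + t • v ∈ frontier {x | ρ x < 0} := by
    rw [(isOpen_lt hρ.continuous continuous_const).frontier_eq]
    exact ⟨segment_subset_iff_forall_add_smul_sub.1 hseg t ⟨ht0.le, ht1.le⟩, hp⟩
  have hmax : IsLocalMax (fun s : ℝ => ρ (a + t • v + s • v)) 0 := by
    filter_upwards [Ioo_mem_nhds (neg_neg_of_pos ht0) (sub_pos.2 ht1)] with s hs
    have := hle (t + s) ⟨by linarith [hs.1], by linarith [hs.2]⟩
    rw [add_smul, ← add_assoc] at this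
    simpa using this.trans (not_lt.1 hp)
  have hv : v ≠ 0 := sub_ne_zero.2 hab.symm
  exact (hhess _ hfr v hv (hmax.fderiv_line_eq_zero (hρ.differentiable (by norm_num)))).not_ge
    (hmax.iteratedFDeriv_two_line_nonpos hρ)

theorem strongly_convex_implies_strictly_convex_general {N : ℕ}
    (Ω : Set (EuclideanSpace ℝ (Fin N)))
    (hΩconn : IsConnected Ω)
    (ρ : EuclideanSpace ℝ (Fin N) → ℝ) (hρ : ContDiff ℝ 2 ρ)
    (hΩdef : Ω = { x | ρ x < 0 })
    (hhess : ∀ p ∈ frontier Ω, ∀ v : EuclideanSpace ℝ (Fin N), v ≠ 0 →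
      fderiv ℝ ρ p v = 0 → 0 < iteratedFDeriv ℝ 2 ρ p ![v, v]) :
    ∀ a ∈ closure Ω, ∀ b ∈ closure Ω, a ≠ b →
      ∀ t : ℝ, 0 < t → t < 1 → (1 - t) • a + t • b ∈ Ω := by
  subst hΩdef
  have hconv : Convex ℝ {x | ρ x < 0} :=
    hΩconn.isPreconnected.convex_of_openSegment_subset
      (isOpen_lt hρ.continuous continuous_const) fun _ _ _ _ hxy hseg =>
        openSegment_subset_of_segment_subset_closure hρ hhess hxy hseg
  intro a ha b hb hab t ht0 ht1
  refine openSegment_subset_of_segment_subset_closure hρ hhess hab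
    (hconv.closure.segment_subset ha hb) ?_
  rw [openSegment_eq_image]
  exact ⟨t, ⟨ht0, ht1⟩, rfl⟩

/-- Strong convexity (positive definite real Hessian of a defining function on
boundary tangent spaces) implies strict convexity: the open segment between any
two points of the closure lies in the domain. -/
theorem strongly_convex_implies_strictly_convex {N : ℕ}
    (Ω : Set (EuclideanSpace ℝ (Fin N))) (hΩne : Ω.Nonempty)
    (hΩconn : IsConnected Ω) (hbd : Bornology.IsBounded Ω)
    (ρ : EuclideanSpace ℝ (Fin N) → ℝ) (hρ : ContDiff ℝ 2 ρ)
    (hΩdef : Ω = { x | ρ x < 0 })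
    (hdρ : ∀ p ∈ frontier Ω, fderiv ℝ ρ p ≠ 0)
    (hhess : ∀ p ∈ frontier Ω, ∀ v : EuclideanSpace ℝ (Fin N), v ≠ 0 →
      fderiv ℝ ρ p v = 0 → 0 < iteratedFDeriv ℝ 2 ρ p ![v, v]) :
    ∀ a ∈ closure Ω, ∀ b ∈ closure Ω, a ≠ b →
      ∀ t : ℝ, 0 < t → t < 1 → (1 - t) • a + t • b ∈ Ω :=
  strongly_convex_implies_strictly_convex_general Ω hΩconn ρ hρ hΩdef hhess
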